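/- Let h(x,y,z) = ϖ(x) − z and X_h be its contact Hamiltonian vector field, which in coordinates has ẋ^a = 0, ẏ_a = ∂ϖ/∂x^a − y_a, ż = ϖ(x) − z. Then the Lie derivatives of h along φ(X_h) and φ²(X_h) both vanish: L_{φ(X_h)} h = L_{φ²(X_h)} h = 0, while L_{X_h} h = −h. -/

import Mathlib

/-- Points/tangent vectors of ℝ^{2n+1} = (x-components, y-components, z). -/
abbrev TVec (n : ℕ) : Type := (Fin n → ℝ) × (Fin n → ℝ) × ℝ

/-- θ̂^a_+ = (1/(2√y_a))(y_a dx^a + dy_a). -/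
noncomputable def thetaP {n : ℕ} (y : Fin n → ℝ) (a : Fin n) (v : TVec n) : ℝ :=
  (1 / (2 * Real.sqrt (y a))) * (y a * v.1 a + v.2.1 a)

/-- θ̂^a_− = (1/(2√y_a))(y_a dx^a − dy_a). -/
noncomputable def thetaM {n : ℕ} (y : Fin n → ℝ) (a : Fin n) (v : TVec n) : ℝ :=
  (1 / (2 * Real.sqrt (y a))) * (y a * v.1 a - v.2.1 a)

/-- e_a^+. -/
noncomputable def eP {n : ℕ} (y : Fin n → ℝ) (a : Fin n) : TVec n :=
  (Pi.single a (Real.sqrt (y a) / y a), Pi.single a (Real.sqrt (y a)),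
    Real.sqrt (y a))

/-- e_a^−. -/
noncomputable def eM {n : ℕ} (y : Fin n → ℝ) (a : Fin n) : TVec n :=
  (Pi.single a (Real.sqrt (y a) / y a), Pi.single a (-Real.sqrt (y a)),
    Real.sqrt (y a))

/-- The (1,1)-tensor φ = −Σ_a (θ̂^a_− ⊗ e_a^+ + θ̂^a_+ ⊗ e_a^−) at y. -/
noncomputable def phiT {n : ℕ} (y : Fin n → ℝ) (v : TVec n) : TVec n :=
  -∑ a, (thetaM y a v • eP y a + thetaP y a v • eM y a)

/-- The contact Hamiltonian h(x,y,z) = ϖ(x) − z. -/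
noncomputable def ham {n : ℕ} (ϖ : (Fin n → ℝ) → ℝ) (p : TVec n) : ℝ :=
  ϖ p.1 - p.2.2

/-- The contact Hamiltonian vector field of h: ẋ = 0, ẏ_a = ∂ϖ/∂x^a − y_a,
ż = ϖ(x) − z. -/
noncomputable def Xham {n : ℕ} (ϖ : (Fin n → ℝ) → ℝ) (p : TVec n) : TVec n :=
  (0, fun a => fderiv ℝ ϖ p.1 (Pi.single a 1) - p.2.1 a, ϖ p.1 - p.2.2)

lemma phiT_xz_zero {n : ℕ} (y : Fin n → ℝ) (v : TVec n) (hv : v.1 = 0) :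
    (phiT y v).1 = 0 ∧ (phiT y v).2.2 = 0 := by
  have key : ∀ a, thetaM y a v + thetaP y a v = 0 := by
    intro a
    have : v.1 a = 0 := by rw [hv]; rfl
    simp [thetaM, thetaP, this]
  constructor
  · have : (phiT y v).1 =
        -∑ a, ((thetaM y a v + thetaP y a v) • (Pi.single a (Real.sqrt (y a) / y a) : Fin n → ℝ)) := by
      simp [phiT, eP, eM, add_smul, Prod.fst_sum, Prod.snd_sum]
    rw [this]
    simp [key]
  · have : (phiT y v).2.2 =
        -∑ a, ((thetaM y a v + thetaP y a v) * Real.sqrt (y a)) := by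
      simp [phiT, eP, eM, add_mul, Prod.fst_sum, Prod.snd_sum]
    rw [this]
    simp [key]

lemma fderiv_ham_apply {n : ℕ} (ϖ : (Fin n → ℝ) → ℝ) (hϖ : ContDiff ℝ (⊤ : ℕ∞) ϖ)
    (p v : TVec n) :
    fderiv ℝ (ham ϖ) p v = fderiv ℝ ϖ p.1 v.1 - v.2.2 := by
  have hd : HasFDerivAt ϖ (fderiv ℝ ϖ p.1) p.1 :=
    (hϖ.differentiable (by simp) p.1).hasFDerivAt
  have h1 : HasFDerivAt (fun q : TVec n => ϖ q.1)
      ((fderiv ℝ ϖ p.1).comp (ContinuousLinearMap.fst ℝ (Fin n → ℝ) ((Fin n → ℝ) × ℝ))) p :=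
    hd.comp p (hasFDerivAt_fst)
  have h2 : HasFDerivAt (fun q : TVec n => q.2.2)
      ((ContinuousLinearMap.snd ℝ (Fin n → ℝ) ℝ).comp
        (ContinuousLinearMap.snd ℝ (Fin n → ℝ) ((Fin n → ℝ) × ℝ))) p :=
    (hasFDerivAt_snd).comp p (hasFDerivAt_snd)
  have h : HasFDerivAt (ham ϖ)
      ((fderiv ℝ ϖ p.1).comp (ContinuousLinearMap.fst ℝ (Fin n → ℝ) ((Fin n → ℝ) × ℝ)) -
        (ContinuousLinearMap.snd ℝ (Fin n → ℝ) ℝ).comp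
          (ContinuousLinearMap.snd ℝ (Fin n → ℝ) ((Fin n → ℝ) × ℝ))) p := h1.sub h2
  rw [h.fderiv]
  rfl

/-- L_{φ(X_h)} h = L_{φ²(X_h)} h = 0, while L_{X_h} h = −h. -/
theorem lie_derivative_of_h_along_phi_Xh {n : ℕ}
    (ϖ : (Fin n → ℝ) → ℝ) (hϖ : ContDiff ℝ (⊤ : ℕ∞) ϖ)
    (p : TVec n) (hp : ∀ a, 0 < p.2.1 a) :
    fderiv ℝ (ham ϖ) p (phiT p.2.1 (Xham ϖ p)) = 0 ∧
    fderiv ℝ (ham ϖ) p (phiT p.2.1 (phiT p.2.1 (Xham ϖ p))) = 0 ∧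
    fderiv ℝ (ham ϖ) p (Xham ϖ p) = -(ham ϖ p) := by
  have hx : (Xham ϖ p).1 = 0 := rfl
  obtain ⟨h1, h2⟩ := phiT_xz_zero p.2.1 _ hx
  obtain ⟨h3, h4⟩ := phiT_xz_zero p.2.1 _ h1
  refine ⟨?_, ?_, ?_⟩ <;> rw [fderiv_ham_apply ϖ hϖ]
  · rw [h1, h2]; simp
  · rw [h3, h4]; simp
  · rw [hx]; simp [ham, Xham]
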